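/- Let ψ = √((1+r)/2)·e₁ ⊗ e₁ + √((1−r)/2)·e₂ ⊗ e₂ with r ∈ [0,1), let v₁ = |θ₁φ₁⟩ with θ₁ ∈ (0,π), and let v₂ = F₁₂(ψ)(v₁)/‖F₁₂(ψ)(v₁)‖. Then |⟨v₂, e₁⟩|² = ((1+r)/(1+r·cosθ₁))·cos²(θ₁/2); equivalently the Bloch vector of v₂ satisfies cosθ₂ = (r + cosθ₁)/(1 + r·cosθ₁). -/

import Mathlib

open Complex
open scoped InnerProductSpace

abbrev Qubit := EuclideanSpace ℂ (Fin 2)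

noncomputable def ket (θ φ : ℝ) : Qubit :=
  WithLp.toLp 2 ![Real.cos (θ/2) * Complex.exp (-Complex.I * (φ/2)),
    Real.sin (θ/2) * Complex.exp (Complex.I * (φ/2))]

/-- The constraint function `F₁₂(ψ)` of the Schmidt-diagonal state
`ψ = √((1+r)/2) e₁⊗e₁ + √((1−r)/2) e₂⊗e₂` (in the standard basis). -/
noncomputable def F12schmidt (r : ℝ) (z : Qubit) : Qubit :=
  WithLp.toLp 2 ![(Real.sqrt ((1 + r) / 2) : ℂ) * starRingEnd ℂ (z 0),
    (Real.sqrt ((1 - r) / 2) : ℂ) * starRingEnd ℂ (z 1)]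

/-! `F₁₂(ψ)` rescales the squared moduli of the coordinates by the Schmidt weights `(1 ± r)/2`,
and the phase of `|θφ⟩` drops out; the normalised image therefore has first-coordinate weight
`(1+r) cos²(θ/2) / (1 + r cos θ)`, and `cos θ = 2 cos²(θ/2) - 1` turns this into the
Möbius-type formula for the Bloch coordinate. -/

theorem EuclideanSpace.norm_inner_normalize_single_sq {ι 𝕜 : Type*} [Fintype ι] [DecidableEq ι]
    [RCLike 𝕜] (v : EuclideanSpace 𝕜 ι) (i : ι) :
    ‖⟪(‖v‖⁻¹ : ℝ) • v, EuclideanSpace.single i (1 : 𝕜)⟫_𝕜‖ ^ 2 = ‖v i‖ ^ 2 / ‖v‖ ^ 2 := by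
  rw [EuclideanSpace.inner_single_right, one_mul, RCLike.norm_conj, PiLp.smul_apply, norm_smul,
    norm_inv, norm_norm, mul_pow, inv_pow, inv_mul_eq_div]

theorem norm_ket_zero_sq (θ φ : ℝ) : ‖ket θ φ 0‖ ^ 2 = Real.cos (θ / 2) ^ 2 := by
  change ‖(Real.cos (θ / 2) : ℂ) * _‖ ^ 2 = _
  rw [norm_mul, Complex.norm_real, Complex.norm_exp, mul_pow, Real.norm_eq_abs, sq_abs]
  simp

theorem norm_ket_one_sq (θ φ : ℝ) : ‖ket θ φ 1‖ ^ 2 = Real.sin (θ / 2) ^ 2 := by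
  change ‖(Real.sin (θ / 2) : ℂ) * _‖ ^ 2 = _
  rw [norm_mul, Complex.norm_real, Complex.norm_exp, mul_pow, Real.norm_eq_abs, sq_abs]
  simp

section F12schmidt

variable {r : ℝ} (z : Qubit)

theorem norm_F12schmidt_zero_sq (hr : -1 ≤ r) :
    ‖F12schmidt r z 0‖ ^ 2 = (1 + r) / 2 * ‖z 0‖ ^ 2 := by
  change ‖(Real.sqrt ((1 + r) / 2) : ℂ) * _‖ ^ 2 = _
  rw [norm_mul, Complex.norm_real, Complex.norm_conj, mul_pow, Real.norm_eq_abs, sq_abs,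
    Real.sq_sqrt (by linarith)]

theorem norm_F12schmidt_one_sq (hr : r ≤ 1) :
    ‖F12schmidt r z 1‖ ^ 2 = (1 - r) / 2 * ‖z 1‖ ^ 2 := by
  change ‖(Real.sqrt ((1 - r) / 2) : ℂ) * _‖ ^ 2 = _
  rw [norm_mul, Complex.norm_real, Complex.norm_conj, mul_pow, Real.norm_eq_abs, sq_abs,
    Real.sq_sqrt (by linarith)]

theorem norm_F12schmidt_ket_sq (hr : r ∈ Set.Icc (-1) 1) (θ φ : ℝ) :
    ‖F12schmidt r (ket θ φ)‖ ^ 2 = (1 + r * Real.cos θ) / 2 := by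
  rw [EuclideanSpace.norm_sq_eq, Fin.sum_univ_two, norm_F12schmidt_zero_sq _ hr.1,
    norm_F12schmidt_one_sq _ hr.2, norm_ket_zero_sq, norm_ket_one_sq, Real.sin_sq, Real.cos_sq,
    mul_div_cancel₀ θ two_ne_zero]
  ring

end F12schmidt

theorem collapse_stretches_bloch_sphere_general (r θ₁ φ₁ : ℝ) (hr : r ∈ Set.Ico (0:ℝ) 1) :
    ‖⟪(‖F12schmidt r (ket θ₁ φ₁)‖⁻¹ : ℝ) • F12schmidt r (ket θ₁ φ₁),
        (EuclideanSpace.single 0 1 : Qubit)⟫_ℂ‖ ^ 2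
      = (1 + r) / (1 + r * Real.cos θ₁) * Real.cos (θ₁ / 2) ^ 2 ∧
    2 * ‖⟪(‖F12schmidt r (ket θ₁ φ₁)‖⁻¹ : ℝ) • F12schmidt r (ket θ₁ φ₁),
        (EuclideanSpace.single 0 1 : Qubit)⟫_ℂ‖ ^ 2 - 1
      = (r + Real.cos θ₁) / (1 + r * Real.cos θ₁) := by
  obtain ⟨hr0, hr1⟩ := hr
  have hden : 1 + r * Real.cos θ₁ ≠ 0 := by nlinarith [Real.neg_one_le_cos θ₁]
  have hweight : ‖⟪(‖F12schmidt r (ket θ₁ φ₁)‖⁻¹ : ℝ) • F12schmidt r (ket θ₁ φ₁),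
      (EuclideanSpace.single 0 1 : Qubit)⟫_ℂ‖ ^ 2
      = (1 + r) / (1 + r * Real.cos θ₁) * Real.cos (θ₁ / 2) ^ 2 := by
    rw [EuclideanSpace.norm_inner_normalize_single_sq, norm_F12schmidt_ket_sq ⟨by linarith, hr1.le⟩,
      norm_F12schmidt_zero_sq _ (by linarith), norm_ket_zero_sq]
    field_simp
  refine ⟨hweight, ?_⟩
  rw [hweight, Real.cos_sq, mul_div_cancel₀ θ₁ two_ne_zero]
  field_simp
  ring

theorem collapse_stretches_bloch_sphere (r θ₁ φ₁ : ℝ) (hr : r ∈ Set.Ico (0:ℝ) 1)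
    (hθ₁ : θ₁ ∈ Set.Ioo 0 Real.pi) :
    ‖⟪(‖F12schmidt r (ket θ₁ φ₁)‖⁻¹ : ℝ) • F12schmidt r (ket θ₁ φ₁),
        (EuclideanSpace.single 0 1 : Qubit)⟫_ℂ‖ ^ 2
      = (1 + r) / (1 + r * Real.cos θ₁) * Real.cos (θ₁ / 2) ^ 2 ∧
    2 * ‖⟪(‖F12schmidt r (ket θ₁ φ₁)‖⁻¹ : ℝ) • F12schmidt r (ket θ₁ φ₁),
        (EuclideanSpace.single 0 1 : Qubit)⟫_ℂ‖ ^ 2 - 1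
      = (r + Real.cos θ₁) / (1 + r * Real.cos θ₁) :=
  collapse_stretches_bloch_sphere_general r θ₁ φ₁ hr
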